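/- arXiv:1802.08207 — 2 statements merged into one kernel-verified Lean document; each statement's English description precedes it below -/
import Mathlib

section
/- Let R be the ring of integers of a finite extension L of Q_p, let M be a finitely generated R-module, and let U : M → M be an R-linear endomorphism. Then the limit e = lim_{n→∞} U^{n!} exists in End_R(M) (for the p-adic topology), e is an idempotent commuting with U, M decomposes as M = eM ⊕ (1−e)M, U restricts to an automorphism of eM, and U is topologically nilpotent on (1−e)M. -/
/-!
Modulo `p ^ i` the ring `End_R(M)` is finite, so the powers of `U` are eventually periodic there;
once `n` exceeds both the preperiod and the period, `U ^ n!` is idempotent modulo `p ^ i` and no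
longer depends on `n`. As a finite module over the complete noetherian ring `R`, `End_R(M)` is
`p`-adically complete and separated, so `U ^ n!` converges to an idempotent `e` commuting with `U`,
and `U ^ n (1 - e) ≡ U ^ n - U ^ (n + m!) ≡ 0`. Finally `e ≡ U * U ^ (N! - 1)` modulo `p`, so by
Nakayama `U` maps `eM` onto itself, and a surjective endomorphism of a finite module is injective.
-/

open AdicCompletion
open scoped Nat

section AdicComplete

variable {R : Type*} [CommRing R] (I : Ideal R)

theorem IsPrecomplete.of_surjective {M N : Type*} [AddCommGroup M] [Module R M] [AddCommGroup N]
    [Module R N] [IsPrecomplete I M] (f : M →ₗ[R] N) (hf : Function.Surjective f) :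
    IsPrecomplete I N := by
  rw [← of_surjective_iff]
  intro y
  obtain ⟨x, rfl⟩ :=
    map_surjective_of_mkQ_comp_surjective ((Submodule.mkQ_surjective _).comp hf) y
  obtain ⟨m, rfl⟩ := AdicCompletion.of_surjective I M x
  exact ⟨f m, (map_of I f m).symm⟩

variable [IsNoetherianRing R]

theorem IsPrecomplete.of_finite [IsPrecomplete I R] (M : Type*) [AddCommGroup M] [Module R M]
    [Module.Finite R M] : IsPrecomplete I M := by
  obtain ⟨k, π, hπ⟩ := Module.Finite.exists_fin' R M
  suffices IsPrecomplete I (Fin k → R) from .of_surjective I π hπ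
  rw [← of_surjective_iff]
  intro y
  -- the completion of a finite free module is obtained by base change to the completion of `R`
  obtain ⟨t, rfl⟩ := (ofTensorProductEquivOfFiniteNoetherian I (Fin k → R)).surjective y
  induction t using TensorProduct.induction_on with
  | zero => exact ⟨0, by simp⟩
  | tmul r x =>
    obtain ⟨s, rfl⟩ := AdicCompletion.of_surjective I R r
    refine ⟨s • x, ?_⟩
    rw [ofTensorProductEquivOfFiniteNoetherian_apply, ofTensorProduct_tmul, map_smul]
    exact (algebraMap_smul (AdicCompletion I R) s _).symm
  | add t t' ht ht' =>
    obtain ⟨x, hx⟩ := ht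
    obtain ⟨x', hx'⟩ := ht'
    exact ⟨x + x', by simp [hx, hx']⟩

variable [IsAdicComplete I R]

theorem IsAdicComplete.of_finite (M : Type*) [AddCommGroup M] [Module R M] [Module.Finite R M] :
    IsAdicComplete I M where
  toIsHausdorff := .of_le_jacobson I M (IsAdicComplete.le_jacobson_bot I)
  toIsPrecomplete := .of_finite I M

variable {A : Type*} [CommRing A] [Algebra R A] [Module.Finite R A]

theorem IsAdicComplete.map_algebraMap_of_finite : IsAdicComplete (I.map (algebraMap R A)) A :=
  have := IsAdicComplete.of_finite I A
  { toIsHausdorff := IsHausdorff.map_algebraMap_iff.2 inferInstance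
    toIsPrecomplete := IsPrecomplete.map_algebraMap_iff.2 inferInstance }

end AdicComplete

theorem Ideal.finite_quotient_map_algebraMap {R A : Type*} [CommRing R] [CommRing A] [Algebra R A]
    [Module.Finite R A] (I : Ideal R) [Finite (R ⧸ I)] : Finite (A ⧸ I.map (algebraMap R A)) := by
  have h := Submodule.finite_quotient_smul I (N := (⊤ : Submodule R A)) Module.Finite.fg_top
  rwa [Ideal.smul_top_eq_map] at h

section PadicInt

variable (p : ℕ) [Fact p.Prime] (A : Type*) [CommRing A] [Algebra ℤ_[p] A] [Module.Finite ℤ_[p] A]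

theorem PadicInt.isAdicComplete_span_p_of_finite : IsAdicComplete (Ideal.span {(p : A)}) A := by
  have h := IsAdicComplete.map_algebraMap_of_finite (A := A) (IsLocalRing.maximalIdeal ℤ_[p])
  rwa [PadicInt.maximalIdeal_eq_span_p, Ideal.map_span, Set.image_singleton, map_natCast] at h

theorem PadicInt.finite_quotient_span_p_of_finite : Finite (A ⧸ Ideal.span {(p : A)}) := by
  have : Finite (ℤ_[p] ⧸ IsLocalRing.maximalIdeal ℤ_[p]) :=
    .of_equiv _ PadicInt.residueField.toEquiv.symm
  have h := Ideal.finite_quotient_map_algebraMap (A := A) (IsLocalRing.maximalIdeal ℤ_[p])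
  rwa [PadicInt.maximalIdeal_eq_span_p, Ideal.map_span, Set.image_singleton, map_natCast] at h

end PadicInt

theorem Submodule.finite_quotient_pow_smul_top {R M : Type*} [CommRing R] [IsNoetherianRing R]
    [AddCommGroup M] [Module R M] [Module.Finite R M] (J : Ideal R) [Finite (R ⧸ J)] (i : ℕ) :
    Finite (M ⧸ (J ^ i • ⊤ : Submodule R M)) :=
  have := Ideal.finite_quotient_pow (IsNoetherian.noetherian J) i
  Submodule.finite_quotient_smul (J ^ i) Module.Finite.fg_top

theorem Module.Finite.linearMap_of_isNoetherianRing {R M N : Type*} [CommRing R]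
    [IsNoetherianRing R] [AddCommGroup M] [Module R M] [Module.Finite R M]
    [AddCommGroup N] [Module R N] [Module.Finite R N] : Module.Finite R (M →ₗ[R] N) := by
  obtain ⟨k, π, hπ⟩ := Module.Finite.exists_fin' R M
  exact .of_injective (LinearMap.lcomp R N π) (LinearMap.lcomp_injective_of_surjective π hπ)

section SModEq

variable {R M N : Type*} [CommRing R] [AddCommGroup M] [Module R M] [AddCommGroup N] [Module R N]
  {J : Ideal R}

theorem SModEq.map_smul_top {x y : M} (h : x ≡ y [SMOD J • (⊤ : Submodule R M)]) (f : M →ₗ[R] N) :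
    f x ≡ f y [SMOD J • (⊤ : Submodule R N)] :=
  (h.map f).mono (by rw [Submodule.map_smul'']; exact Submodule.smul_mono le_rfl le_top)

theorem SModEq.apply {F G : Module.End R M}
    (h : F ≡ G [SMOD J • (⊤ : Submodule R (Module.End R M))]) (x : M) :
    F x ≡ G x [SMOD J • (⊤ : Submodule R M)] :=
  h.map_smul_top (LinearMap.applyₗ x)

theorem SModEq.mul_of_smul_top {A : Type*} [Ring A] [Algebra R A] {a b c d : A}
    (h₁ : a ≡ b [SMOD J • (⊤ : Submodule R A)]) (h₂ : c ≡ d [SMOD J • (⊤ : Submodule R A)]) :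
    a * c ≡ b * d [SMOD J • (⊤ : Submodule R A)] :=
  (h₁.map_smul_top (LinearMap.mulRight R c)).trans (h₂.map_smul_top (LinearMap.mulLeft R b))

end SModEq

section OrdinaryProjector

variable {S A : Type*} [CommRing S] [Ring A] [Algebra S A]

theorem exists_pow_add_factorial_smodEq (J : Ideal S) [Finite (A ⧸ (J • ⊤ : Submodule S A))]
    (u : A) : ∃ N, ∀ n ≥ N, ∀ m ≥ N, u ^ (n + m !) ≡ u ^ n [SMOD J • (⊤ : Submodule S A)] := by
  obtain ⟨a, b, hab, hmk⟩ := Set.Finite.exists_lt_map_eq_of_forall_mem (t := Set.univ)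
    (f := fun n : ℕ => Submodule.Quotient.mk (p := J • (⊤ : Submodule S A)) (u ^ n))
    (fun _ => Set.mem_univ _) Set.finite_univ
  obtain ⟨d, rfl⟩ := Nat.exists_eq_add_of_lt hab
  have hstep : ∀ n ≥ a, u ^ (n + (d + 1)) ≡ u ^ n [SMOD J • (⊤ : Submodule S A)] := by
    intro n hn
    obtain ⟨c, rfl⟩ := Nat.exists_eq_add_of_le hn
    have h : u ^ (a + d + 1) ≡ u ^ a [SMOD J • (⊤ : Submodule S A)] := hmk.symm
    simpa only [← pow_add, add_assoc, add_comm c] using (SModEq.refl (u ^ c)).mul_of_smul_top h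
  have hiter : ∀ n ≥ a, ∀ k, u ^ (n + k * (d + 1)) ≡ u ^ n [SMOD J • (⊤ : Submodule S A)] := by
    intro n hn k
    induction k with
    | zero => simp
    | succ k ih =>
      rw [add_one_mul, ← add_assoc]
      exact (hstep _ (hn.trans (Nat.le_add_right _ _))).trans ih
  refine ⟨max a (d + 1), fun n hn m hm => ?_⟩
  obtain ⟨k, hk⟩ := Nat.dvd_factorial (Nat.succ_pos d) (le_of_max_le_right hm)
  rw [hk, mul_comm]
  exact hiter n (le_of_max_le_left hn) k

variable (I : Ideal S)

def IsOrdinaryProjector (u e : A) : Prop :=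
  ∀ i, ∃ N, ∀ n ≥ N, u ^ n ! ≡ e [SMOD I ^ i • (⊤ : Submodule S A)]

theorem exists_isOrdinaryProjector [∀ i, Finite (A ⧸ (I ^ i • ⊤ : Submodule S A))]
    [IsPrecomplete I A] (u : A) :
    ∃ e, IsOrdinaryProjector I u e := by
  choose N hN using fun i => exists_pow_add_factorial_smodEq (I ^ i) u
  have hfact : ∀ i, ∀ m ≥ N i, ∀ n ≥ N i,
      u ^ m ! ≡ u ^ n ! [SMOD I ^ i • (⊤ : Submodule S A)] := fun i m hm n hn =>
    calc u ^ m ! ≡ u ^ (m ! + n !) [SMOD I ^ i • (⊤ : Submodule S A)] :=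
          (hN i _ (hm.trans (Nat.self_le_factorial m)) n hn).symm
      _ = u ^ (n ! + m !) := by rw [add_comm]
      _ ≡ u ^ n ! [SMOD I ^ i • (⊤ : Submodule S A)] :=
          hN i _ (hn.trans (Nat.self_le_factorial n)) m hm
  -- a monotone choice of thresholds makes `u ^ (K i)!` an `I`-adic Cauchy sequence
  let K i := (Finset.range (i + 1)).sup N
  have hK : ∀ {i j}, i ≤ j → N i ≤ K j := fun hij =>
    Finset.le_sup (f := N) (Finset.mem_range.2 (Nat.lt_succ_of_le hij))
  obtain ⟨e, he⟩ := IsPrecomplete.prec ‹_› (f := fun i => u ^ (K i)!)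
    fun hij => hfact _ _ (hK le_rfl) _ (hK hij)
  exact ⟨e, fun i => ⟨K i, fun n hn =>
    (hfact i n ((hK le_rfl).trans hn) _ (hK le_rfl)).trans (he i)⟩⟩

namespace IsOrdinaryProjector

variable {I} {u e : A}

theorem isIdempotentElem [∀ i, Finite (A ⧸ (I ^ i • ⊤ : Submodule S A))] [IsHausdorff I A]
    (he : IsOrdinaryProjector I u e) : IsIdempotentElem e := by
  refine (IsHausdorff.eq_iff_smodEq (I := I)).2 fun i => ?_
  obtain ⟨N, hN⟩ := exists_pow_add_factorial_smodEq (I ^ i) u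
  obtain ⟨N', hN'⟩ := he i
  have h := hN' (max N N') (le_max_right _ _)
  calc e * e ≡ u ^ (max N N')! * u ^ (max N N')! [SMOD I ^ i • (⊤ : Submodule S A)] :=
        h.symm.mul_of_smul_top h.symm
    _ = u ^ ((max N N')! + (max N N')!) := (pow_add _ _ _).symm
    _ ≡ u ^ (max N N')! [SMOD I ^ i • (⊤ : Submodule S A)] :=
        hN _ ((le_max_left _ _).trans (Nat.self_le_factorial _)) _ (le_max_left _ _)
    _ ≡ e [SMOD I ^ i • (⊤ : Submodule S A)] := h

theorem commute [IsHausdorff I A] (he : IsOrdinaryProjector I u e) : Commute e u := by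
  refine (IsHausdorff.eq_iff_smodEq (I := I)).2 fun i => ?_
  obtain ⟨N, hN⟩ := he i
  calc e * u ≡ u ^ N ! * u [SMOD I ^ i • (⊤ : Submodule S A)] :=
        (hN N le_rfl).symm.mul_of_smul_top SModEq.rfl
    _ = u * u ^ N ! := pow_mul_comm' u _
    _ ≡ u * e [SMOD I ^ i • (⊤ : Submodule S A)] := SModEq.rfl.mul_of_smul_top (hN N le_rfl)

theorem pow_mul_one_sub_smodEq_zero [∀ i, Finite (A ⧸ (I ^ i • ⊤ : Submodule S A))]
    (he : IsOrdinaryProjector I u e) (i : ℕ) :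
    ∃ N, ∀ n ≥ N, u ^ n * (1 - e) ≡ 0 [SMOD I ^ i • (⊤ : Submodule S A)] := by
  obtain ⟨N, hN⟩ := exists_pow_add_factorial_smodEq (I ^ i) u
  obtain ⟨N', hN'⟩ := he i
  refine ⟨N, fun n hn => ?_⟩
  calc u ^ n * (1 - e) ≡ u ^ n * (1 - u ^ (max N N')!) [SMOD I ^ i • (⊤ : Submodule S A)] :=
        SModEq.rfl.mul_of_smul_top (SModEq.rfl.sub (hN' _ (le_max_right _ _)).symm)
    _ = u ^ n - u ^ (n + (max N N')!) := by rw [mul_sub, mul_one, pow_add]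
    _ ≡ u ^ n - u ^ n [SMOD I ^ i • (⊤ : Submodule S A)] :=
        SModEq.rfl.sub (hN n hn _ (le_max_left _ _))
    _ = 0 := sub_self _

end IsOrdinaryProjector

end OrdinaryProjector

section Module

variable {R M : Type*} [CommRing R] [AddCommGroup M] [Module R M]

theorem Submodule.injOn_of_map_eq_self {N : Submodule R M} [Module.Finite R N]
    {U : Module.End R M} (h : N.map U = N) : Set.InjOn U N := by
  have hU : ∀ x ∈ N, U x ∈ N := fun x hx => h ▸ Submodule.mem_map_of_mem hx
  have hsurj : Function.Surjective (U.restrict hU) := by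
    rintro ⟨y, hy⟩
    obtain ⟨x, hx, rfl⟩ := (h.symm ▸ hy : y ∈ N.map U)
    exact ⟨⟨x, hx⟩, rfl⟩
  intro x hx y hy hxy
  exact congr_arg Subtype.val
    (OrzechProperty.injective_of_surjective_endomorphism _ hsurj (a₁ := ⟨x, hx⟩) (a₂ := ⟨y, hy⟩)
      (Subtype.ext hxy))

theorem LinearMap.map_range_eq_range_of_smodEq_mul [Module.Finite R M] {J : Ideal R}
    (hJ : J ≤ (⊥ : Ideal R).jacobson) {e U V : Module.End R M} (he : IsIdempotentElem e)
    (hc : Commute e U) (hUV : e ≡ U * V [SMOD J • (⊤ : Submodule R (Module.End R M))]) :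
    (LinearMap.range e).map U = LinearMap.range e := by
  have hcx : ∀ x, e (U x) = U (e x) := fun x => LinearMap.congr_fun hc.eq x
  refine le_antisymm ?_ ?_
  · rintro _ ⟨_, ⟨x, rfl⟩, rfl⟩
    exact ⟨U x, hcx x⟩
  -- Nakayama: `eM ⊆ U(eM) + J • eM`, since `e x = e (e x) ≡ e (U (V (e x)))`
  refine Submodule.le_of_le_smul_of_le_jacobson_bot (Module.Finite.iff_fg.1 inferInstance) hJ ?_
  rintro _ ⟨x, rfl⟩
  have hmem : e x - (U * V) (e x) ∈ J • (⊤ : Submodule R M) := by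
    simpa only [← Module.End.mul_apply, he.eq] using SModEq.sub_mem.1 (hUV.apply (e x))
  have hsplit : e x = U (e (V (e x))) + e (e x - (U * V) (e x)) := by
    rw [map_sub, ← Module.End.mul_apply e e, he.eq, Module.End.mul_apply, hcx, add_sub_cancel]
  rw [hsplit]
  refine Submodule.add_mem_sup (Submodule.mem_map_of_mem ⟨_, rfl⟩) ?_
  rw [LinearMap.range_eq_map, ← Submodule.map_smul'']
  exact Submodule.mem_map_of_mem hmem

end Module

/-- Hida's ordinary projector: Let `R` be the ring of integers of a finite
extension `L/ℚ_p`, `M` a finitely generated `R`-module and `U` an `R`-linear endomorphism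
of `M`.  Then `e = lim_{n→∞} U^{n!}` exists `p`-adically in `End_R(M)`, is an idempotent
commuting with `U`, `M = eM ⊕ (1−e)M`, `U` restricts to an automorphism of `eM`, and `U`
is topologically nilpotent on `(1−e)M`. -/
theorem asai_stmt_11 (p : ℕ) [Fact p.Prime]
    (L : Type*) [Field L] [Algebra ℤ_[p] L] [Algebra ℚ_[p] L] [IsScalarTower ℤ_[p] ℚ_[p] L] [FiniteDimensional ℚ_[p] L]
    (M : Type*) [AddCommGroup M] [Module (integralClosure ℤ_[p] L) M]
    [Module.Finite (integralClosure ℤ_[p] L) M]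
    (U : Module.End (integralClosure ℤ_[p] L) M) :
    ∃ e : Module.End (integralClosure ℤ_[p] L) M,
      -- convergence of `U^{n!}` to `e` in the `p`-adic topology
      (∀ i : ℕ, ∃ N₀ : ℕ, ∀ n ≥ N₀, ∀ x : M,
        (U ^ n.factorial) x - e x ∈
          (Ideal.span {(p : integralClosure ℤ_[p] L)}) ^ i •
            (⊤ : Submodule (integralClosure ℤ_[p] L) M)) ∧
      -- idempotent commuting with `U`
      e * e = e ∧ e * U = U * e ∧
      -- `M = eM ⊕ (1−e)M`
      IsCompl (LinearMap.range e) (LinearMap.range (1 - e)) ∧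
      -- `U` restricts to an automorphism of `eM`
      Submodule.map U (LinearMap.range e) = LinearMap.range e ∧
      (∀ x : M, U (e x) = 0 → e x = 0) ∧
      -- `U` topologically nilpotent on `(1−e)M`
      (∀ i : ℕ, ∃ N₀ : ℕ, ∀ n ≥ N₀, ∀ x : M,
        (U ^ n) ((1 - e) x) ∈
          (Ideal.span {(p : integralClosure ℤ_[p] L)}) ^ i •
            (⊤ : Submodule (integralClosure ℤ_[p] L) M)) := by
  set J := Ideal.span {(p : integralClosure ℤ_[p] L)}
  have : Module.Finite ℤ_[p] (integralClosure ℤ_[p] L) :=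
    IsIntegralClosure.finite ℤ_[p] ℚ_[p] L _
  have : IsNoetherianRing (integralClosure ℤ_[p] L) := .of_finite ℤ_[p] _
  have := PadicInt.isAdicComplete_span_p_of_finite p (integralClosure ℤ_[p] L)
  have := PadicInt.finite_quotient_span_p_of_finite p (integralClosure ℤ_[p] L)
  have : Module.Finite (integralClosure ℤ_[p] L) (Module.End (integralClosure ℤ_[p] L) M) :=
    .linearMap_of_isNoetherianRing
  have := IsAdicComplete.of_finite J (Module.End (integralClosure ℤ_[p] L) M)
  have := Submodule.finite_quotient_pow_smul_top (M := Module.End (integralClosure ℤ_[p] L) M) J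
  obtain ⟨e, he⟩ := exists_isOrdinaryProjector J U
  have hidem : IsIdempotentElem e := he.isIdempotentElem
  obtain ⟨N, hN⟩ := he 1
  obtain ⟨k, hk⟩ := Nat.exists_eq_add_one_of_ne_zero N.factorial_ne_zero
  have hmap := LinearMap.map_range_eq_range_of_smodEq_mul (IsAdicComplete.le_jacobson_bot J)
    hidem he.commute (V := U ^ k) (by simpa [hk, pow_succ'] using (hN N le_rfl).symm)
  refine ⟨e, fun i => ?_, hidem.eq, he.commute.eq, ?_, hmap, fun x hx => ?_, fun i => ?_⟩
  · obtain ⟨N, hN⟩ := he i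
    exact ⟨N, fun n hn x => SModEq.sub_mem.1 ((hN n hn).apply x)⟩
  · exact LinearMap.IsIdempotentElem.ker_eq_range_one_sub hidem ▸
      LinearMap.IsIdempotentElem.isCompl hidem
  · exact Submodule.injOn_of_map_eq_self hmap ⟨x, rfl⟩ (Submodule.zero_mem _)
      (hx.trans (map_zero U).symm)
  · obtain ⟨N, hN⟩ := he.pow_mul_one_sub_smodEq_zero i
    exact ⟨N, fun n hn x => SModEq.zero.1 ((hN n hn).apply x)⟩
end

section
/- For integers k ≥ 2, N ≥ 1, and β = 1/N ∈ Q/Z, the series E^{(k)}_{β}(τ,s) admits the unfolding: for Re(s) ≫ 0, E^{(k)}_{1/N}(τ,s) = (Γ(s+k)N^{2s+k}/((−2πi)^k π^s)) · ∑_{t ≥ 1, (t,N)=1} t^{−k−2s} ⟨t⟩⁻¹ [ ∑_{γ ∈ Γ_∞\Γ₁(N)} (Im(τ)^s |_k γ) ], where Γ_∞ = {(1 n; 0 1) : n ∈ Z}, ⟨t⟩ denotes the diamond operator, and |_k is the weight-k slash action. -/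
/-!
Since `mτ + n + 1/N = (Nmτ + Nn + 1)/N` and `z ↦ z⁻ᵏ |z|⁻²ˢ` is homogeneous of degree `-k-2s`
under positive real scaling, the series is `N^(2s+k)` times the sum over the lattice points
`(a, b) ≡ (0, 1) mod N`. Each such nonzero point is uniquely `t • (c, d)` with `t = gcd(a, b)`
prime to `N`, `(c, d)` primitive, `N ∣ c` and `dt ≡ 1 mod N`; pulling out `t^(-k-2s)` yields the
inner sums. For `k + 2 Re s > 2` the lattice sum converges absolutely, which justifies the
rearrangement.
-/

open scoped Real
open Complex

noncomputable def eisKernel (k : ℕ) (s z : ℂ) : ℂ := z ^ (-(k : ℤ)) * ((‖z‖ : ℝ) : ℂ) ^ (-2 * s)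

section eisKernel

variable {k : ℕ} {s : ℂ}

lemma eisKernel_zero (hk : k ≠ 0) : eisKernel k s 0 = 0 := by
  simp [eisKernel, zero_zpow _ (by omega : -(k : ℤ) ≠ 0)]

lemma div_pow_mul_cpow_norm_eq_mul_eisKernel (a z : ℂ) :
    a / (z ^ k * ((‖z‖ : ℝ) : ℂ) ^ (2 * s)) = a * eisKernel k s z := by
  rw [eisKernel, div_eq_mul_inv, mul_inv, zpow_neg, zpow_natCast, neg_mul, cpow_neg]

lemma eisKernel_ofReal_mul {r : ℝ} (hr : 0 < r) (z : ℂ) :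
    eisKernel k s (r * z) = (r : ℂ) ^ (-(k : ℂ) - 2 * s) * eisKernel k s z := by
  have hsplit : (r : ℂ) ^ (-(k : ℂ) - 2 * s) = (r : ℂ) ^ (-(k : ℤ)) * (r : ℂ) ^ (-2 * s) := by
    rw [sub_eq_add_neg, cpow_add _ _ (ofReal_ne_zero.mpr hr.ne'), ← neg_mul, cpow_neg,
      cpow_natCast, zpow_neg, zpow_natCast]
  rw [eisKernel, eisKernel, mul_zpow, norm_mul, norm_real, Real.norm_of_nonneg hr.le, ofReal_mul,
    mul_cpow_ofReal_nonneg hr.le (norm_nonneg z), hsplit]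
  ring

lemma norm_eisKernel_le (hk : k ≠ 0) (z : ℂ) :
    ‖eisKernel k s z‖ ≤ ‖z‖ ^ (-((k : ℝ) + 2 * s.re)) := by
  rcases eq_or_ne z 0 with rfl | hz
  · rw [eisKernel_zero hk, norm_zero]
    positivity
  · have hz' : 0 < ‖z‖ := norm_pos_iff.mpr hz
    rw [eisKernel, norm_mul, norm_zpow, norm_cpow_eq_rpow_re_of_pos hz', ← Real.rpow_intCast,
      ← Real.rpow_add hz']
    apply le_of_eq
    congr 1
    simp only [Int.cast_neg, Int.cast_natCast, neg_mul, neg_re, mul_re, re_ofNat, im_ofNat,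
      zero_mul, sub_zero]
    ring

end eisKernel

/-- The value at `τ` of `(Im)^s |_k γ` for any `γ ∈ SL₂(ℤ)` with bottom row `p`. -/
noncomputable def slashImPow (k : ℕ) (s : ℂ) (τ : UpperHalfPlane) (p : ℤ × ℤ) : ℂ :=
  (τ.im : ℂ) ^ s * eisKernel k s (p.1 * τ + p.2)

section slashImPow

variable {k : ℕ} {s : ℂ} {τ : UpperHalfPlane}

lemma slashImPow_zero (hk : k ≠ 0) : slashImPow k s τ 0 = 0 := by
  simp [slashImPow, eisKernel_zero hk]

lemma slashImPow_nsmul {t : ℕ} (ht : t ≠ 0) (p : ℤ × ℤ) :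
    slashImPow k s τ (t • p) = (t : ℂ) ^ (-(k : ℂ) - 2 * s) * slashImPow k s τ p := by
  have hlin : (((t • p).1 : ℤ) : ℂ) * τ + ((t • p).2 : ℤ) = ((t : ℝ) : ℂ) * (p.1 * τ + p.2) := by
    rw [Prod.smul_fst, Prod.smul_snd, nsmul_eq_mul, nsmul_eq_mul]
    push_cast
    ring
  rw [slashImPow, slashImPow, hlin, eisKernel_ofReal_mul (by positivity), ofReal_natCast]
  ring

lemma summable_slashImPow (hk : k ≠ 0) (hs : 2 < (k : ℝ) + 2 * s.re) :
    Summable (slashImPow k s τ) := by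
  have hlattice : Summable fun p : ℤ × ℤ => ‖(p.1 : ℂ) * τ + p.2‖ ^ (-((k : ℝ) + 2 * s.re)) := by
    refine (finTwoArrowEquiv ℤ).summable_iff.mp ?_
    exact ((EisensteinSeries.summable_one_div_norm_rpow hs).mul_left
      (EisensteinSeries.r τ ^ (-((k : ℝ) + 2 * s.re)))).of_nonneg_of_le
      (fun _ => Real.rpow_nonneg (norm_nonneg _) _)
      fun x => EisensteinSeries.summand_bound τ (by linarith) x
  refine (hlattice.mul_left (τ.im ^ s.re)).of_norm_bounded fun p => ?_
  rw [slashImPow, norm_mul, norm_cpow_eq_rpow_re_of_pos τ.im_pos]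
  exact mul_le_mul_of_nonneg_left (norm_eisKernel_le hk _) (by positivity)

lemma div_shift_eq_slashImPow {N : ℕ} (hN : N ≠ 0) (p : ℤ × ℤ) :
    (τ.im : ℂ) ^ s / (((p.1 : ℂ) * τ + p.2 + 1 / N) ^ k *
        ((‖(p.1 : ℂ) * τ + p.2 + 1 / N‖ : ℝ) : ℂ) ^ (2 * s)) =
      (N : ℂ) ^ (2 * s + k) * slashImPow k s τ ((N : ℤ) * p.1, (N : ℤ) * p.2 + 1) := by
  have hN' : (N : ℂ) ≠ 0 := Nat.cast_ne_zero.mpr hN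
  have hscale := eisKernel_ofReal_mul (k := k) (s := s) (r := N) (by positivity)
    ((p.1 : ℂ) * τ + p.2 + 1 / N)
  have hlin : ((N : ℝ) : ℂ) * ((p.1 : ℂ) * τ + p.2 + 1 / N) =
      (((N : ℤ) * p.1 : ℤ) : ℂ) * τ + (((N : ℤ) * p.2 + 1 : ℤ) : ℂ) := by
    push_cast
    field_simp
    ring
  have hcancel : (N : ℂ) ^ (-(k : ℂ) - 2 * s) * (N : ℂ) ^ (2 * s + k) = 1 := by
    rw [← cpow_add _ _ hN', neg_sub_left, add_comm, add_neg_cancel, cpow_zero]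
  rw [div_pow_mul_cpow_norm_eq_mul_eisKernel, slashImPow, ← hlin, hscale, ofReal_natCast]
  linear_combination (-((τ.im : ℂ) ^ s * eisKernel k s ((p.1 : ℂ) * τ + p.2 + 1 / N))) * hcancel

end slashImPow

def unfoldingIndex (N : ℕ) : Set (ℕ × ℤ × ℤ) :=
  {x | (1 ≤ x.1 ∧ x.1.Coprime N) ∧
    Int.gcd x.2.1 x.2.2 = 1 ∧ (N : ℤ) ∣ x.2.1 ∧ ((x.2.2 * x.1 : ℤ) : ZMod N) = 1}

section unfoldingIndex

variable (N : ℕ)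

lemma injOn_smul_unfoldingIndex :
    Set.InjOn (fun x : ℕ × ℤ × ℤ => x.1 • x.2) (unfoldingIndex N) := by
  have hgcd (t : ℕ) {p : ℤ × ℤ} (hp : Int.gcd p.1 p.2 = 1) : Int.gcd (t • p).1 (t • p).2 = t := by
    rw [Prod.smul_fst, Prod.smul_snd, nsmul_eq_mul, nsmul_eq_mul, Int.gcd_mul_left, hp, mul_one,
      Int.natAbs_natCast]
  rintro ⟨t, p⟩ ⟨⟨ht, -⟩, hp, -⟩ ⟨t', p'⟩ ⟨-, hp', -⟩ h
  dsimp only at ht hp hp' h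
  obtain rfl : t = t' := by rw [← hgcd t hp, ← hgcd t' hp', h]
  rw [smul_right_injective (ℤ × ℤ) (by omega : t ≠ 0) h]

lemma smul_image_unfoldingIndex :
    (fun x : ℕ × ℤ × ℤ => x.1 • x.2) '' unfoldingIndex N =
      Set.range (fun p : ℤ × ℤ => ((N : ℤ) * p.1, (N : ℤ) * p.2 + 1)) \ {0} := by
  ext ⟨a, b⟩
  constructor
  · rintro ⟨⟨t, c, d⟩, ⟨⟨ht, -⟩, hcd, ⟨c', rfl⟩, hdt⟩, hx⟩
    dsimp only at ht hcd hdt hx ⊢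
    obtain ⟨n, hn⟩ : (N : ℤ) ∣ d * t - 1 := by
      rw [← ZMod.intCast_zmod_eq_zero_iff_dvd, Int.cast_sub, hdt, Int.cast_one, sub_self]
    have hcd0 : ((N : ℤ) * c', d) ≠ 0 := by
      rintro h
      simp only [Prod.mk_eq_zero] at h
      simp [h.1, h.2] at hcd
    refine ⟨⟨(t * c', n), ?_⟩, ?_⟩
    · rw [← hx, Prod.smul_mk, nsmul_eq_mul, nsmul_eq_mul]
      ext
      · ring
      · linear_combination -hn
    · rw [← hx]
      exact smul_ne_zero (by omega) hcd0
  · rintro ⟨⟨⟨m, n⟩, hmn⟩, hne⟩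
    simp only [Prod.mk.injEq] at hmn
    obtain ⟨rfl, rfl⟩ := hmn
    have hpos : 0 < Int.gcd ((N : ℤ) * m) ((N : ℤ) * n + 1) :=
      Int.gcd_pos_iff.mpr (not_and_or.mp fun h => hne (Prod.ext h.1 h.2))
    obtain ⟨g, c, d, hg, hcd, hc, hd⟩ := Int.exists_gcd_one' hpos
    have hgN : IsCoprime (g : ℤ) N := ⟨d, -n, by linear_combination -hd⟩
    refine ⟨(g, c, d), ⟨⟨hg, Nat.isCoprime_iff_coprime.mp hgN⟩, hcd, ?_, ?_⟩, ?_⟩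
    · exact hgN.symm.dvd_of_dvd_mul_right ⟨m, hc.symm⟩
    · dsimp only
      rw [← hd]
      push_cast
      simp
    · dsimp only
      rw [Prod.smul_mk, nsmul_eq_mul, nsmul_eq_mul, hc, hd, mul_comm, mul_comm (g : ℤ)]

variable {N} in
lemma tsum_shift_eq_tsum_indicator_unfoldingIndex {M : Type*} [AddCommMonoid M]
    [TopologicalSpace M] (hN : N ≠ 0) {f : ℤ × ℤ → M} (hf : f 0 = 0) :
    ∑' p : ℤ × ℤ, f ((N : ℤ) * p.1, (N : ℤ) * p.2 + 1) =
      ∑' x : ℕ × ℤ × ℤ, (unfoldingIndex N).indicator (fun x => f (x.1 • x.2)) x := by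
  set shift := fun p : ℤ × ℤ => ((N : ℤ) * p.1, (N : ℤ) * p.2 + 1)
  have hshift : Function.Injective shift := fun p q h => by
    have hN' : (N : ℤ) ≠ 0 := by exact_mod_cast hN
    simp only [shift, Prod.mk.injEq, add_left_inj, mul_right_inj' hN'] at h
    exact Prod.ext h.1 h.2
  have hzero : (Set.range shift \ {0}).indicator f = (Set.range shift).indicator f := by
    ext y
    rcases eq_or_ne y 0 with rfl | hy
    · rw [Set.indicator_of_notMem (fun h => h.2 rfl), Set.indicator_apply_eq_zero.mpr fun _ => hf]
    · classical
      simp [Set.indicator_apply, hy]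
  calc ∑' p, f (shift p)
      = ∑' y : Set.range shift, f y := (tsum_range f hshift).symm
    _ = ∑' y : ((fun x : ℕ × ℤ × ℤ => x.1 • x.2) '' unfoldingIndex N), f y := by
      rw [smul_image_unfoldingIndex, tsum_subtype, tsum_subtype, hzero]
    _ = ∑' x : unfoldingIndex N, f (x.1.1 • x.1.2) := tsum_image f (injOn_smul_unfoldingIndex N)
    _ = _ := tsum_subtype (unfoldingIndex N) fun x => f (x.1 • x.2)

variable {k : ℕ} {s : ℂ} {τ : UpperHalfPlane}

lemma tsum_indicator_unfoldingIndex_fiber (t : ℕ) :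
    ∑' q : ℤ × ℤ,
        (unfoldingIndex N).indicator (fun x => slashImPow k s τ (x.1 • x.2)) (t, q) =
      if 1 ≤ t ∧ t.Coprime N then
        (t : ℂ) ^ (-(k : ℂ) - 2 * s) * ∑' q : ℤ × ℤ,
          if Int.gcd q.1 q.2 = 1 ∧ (N : ℤ) ∣ q.1 ∧ ((q.2 * t : ℤ) : ZMod N) = 1 then
            slashImPow k s τ q else 0
      else 0 := by
  split_ifs with ht
  · rw [← tsum_mul_left]
    refine tsum_congr fun q => ?_
    by_cases hq : Int.gcd q.1 q.2 = 1 ∧ (N : ℤ) ∣ q.1 ∧ ((q.2 * t : ℤ) : ZMod N) = 1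
    · rw [Set.indicator_of_mem (show (t, q) ∈ unfoldingIndex N from ⟨ht, hq⟩), if_pos hq]
      exact slashImPow_nsmul (by omega) q
    · rw [Set.indicator_of_notMem (fun h => hq h.2), if_neg hq, mul_zero]
  · exact (tsum_congr fun q => Set.indicator_of_notMem (fun h => ht h.1) _).trans tsum_zero

end unfoldingIndex

/-- unfolding of the Eisenstein series `E^{(k)}_{1/N}(τ,s)`: for
`Re(s) ≫ 0`,
`E^{(k)}_{1/N}(τ,s) = (Γ(s+k)N^{2s+k}/((−2πi)^k π^s)) ∑_{t≥1,(t,N)=1} t^{−k−2s} ⟨t⟩⁻¹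
[∑_{γ ∈ Γ_∞\Γ₁(N)} (Im τ)^s |_k γ]`.
Here the cosets `Γ_∞\Γ₁(N)` twisted by the diamond operator `⟨t⟩⁻¹` are parametrised by
the bottom rows `(c,d)` with `gcd(c,d) = 1`, `N ∣ c` and `dt ≡ 1 mod N`, and
`((Im)^s|_k γ)(τ) = (cτ+d)^{−k}|cτ+d|^{−2s} Im(τ)^s`. -/
theorem asai_stmt_16 (k N : ℕ) (hk : 2 ≤ k) (hN : 1 ≤ N) (s : ℂ)
    (hs : 2 < (k : ℝ) + 2 * s.re) (τ : UpperHalfPlane) :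
    Complex.Gamma (s + k) / ((-2 * π * I) ^ k * (π : ℂ) ^ s) *
      ∑' q : ℤ × ℤ, ((τ.im : ℂ)) ^ s /
        (((q.1 : ℂ) * (τ : ℂ) + (q.2 : ℂ) + 1 / (N : ℂ)) ^ k *
          ((‖(q.1 : ℂ) * (τ : ℂ) + (q.2 : ℂ) + 1 / (N : ℂ)‖ : ℝ) : ℂ) ^ (2 * s))
    = Complex.Gamma (s + k) * (N : ℂ) ^ (2 * s + k) / ((-2 * π * I) ^ k * (π : ℂ) ^ s) *
      ∑' t : ℕ,
        (if 1 ≤ t ∧ Nat.Coprime t N then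
          ((t : ℂ)) ^ (-(k : ℂ) - 2 * s) *
            ∑' q : ℤ × ℤ,
              (if Int.gcd q.1 q.2 = 1 ∧ (N : ℤ) ∣ q.1 ∧ (((q.2 * t : ℤ) : ZMod N) = 1) then
                ((τ.im : ℂ)) ^ s * ((q.1 : ℂ) * (τ : ℂ) + (q.2 : ℂ)) ^ (-(k : ℤ)) *
                  ((‖(q.1 : ℂ) * (τ : ℂ) + (q.2 : ℂ)‖ : ℝ) : ℂ) ^ (-2 * s)
              else 0)
        else 0) := by
  have hk0 : k ≠ 0 := by omega
  have hN0 : N ≠ 0 := by omega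
  have hsummable : Summable ((unfoldingIndex N).indicator
      fun x : ℕ × ℤ × ℤ => slashImPow k s τ (x.1 • x.2)) := by
    rw [← summable_subtype_iff_indicator]
    exact (summable_slashImPow hk0 hs).comp_injective (injOn_smul_unfoldingIndex N).injective
  simp_rw [div_shift_eq_slashImPow hN0, tsum_mul_left,
    tsum_shift_eq_tsum_indicator_unfoldingIndex hN0 (slashImPow_zero hk0), hsummable.tsum_prod,
    tsum_indicator_unfoldingIndex_fiber, slashImPow, eisKernel, ← mul_assoc]
  ring
end
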